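/- arXiv:2301.00664 — 2 statements merged into one kernel-verified Lean document; each statement's English description precedes it below -/
import Mathlib

section
/- For all integers n ≥ 1 and 1 ≤ j ≤ n, the expected number of uncovered edges after uncovering j vertices of a uniformly random labeled tree on n vertices satisfies E[K_j^{(n)}] = j(j−1)/n. -/
open scoped Classical
open Filter Topology MeasureTheory

/-- The finite set of all labeled trees on vertex set `Fin n`
(vertex `v : Fin n` carries label `v + 1 ∈ {1, …, n}`). -/
noncomputable def treeSet (n : ℕ) : Finset (SimpleGraph (Fin n)) :=
  Finset.univ.filter fun T => T.IsTree

/-- `uncoverEdges T j` is the number of edges of the subgraph of `T` induced by the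
first `j` vertices (those with label `≤ j`, i.e. `Fin`-value `< j`);
this is `k_j(T)`, the number of uncovered edges after `j` uncover steps. -/
noncomputable def uncoverEdges {n : ℕ} (T : SimpleGraph (Fin n)) (j : ℕ) : ℕ :=
  (Finset.univ.filter fun p : Fin n × Fin n =>
    T.Adj p.1 p.2 ∧ p.1 < p.2 ∧ (p.2 : ℕ) < j).card

/-- The subgraph (on the same vertex set) induced by the vertices with label `≤ k`:
the forest uncovered after `k` steps. -/
def restrictBelow {n : ℕ} (T : SimpleGraph (Fin n)) (k : ℕ) : SimpleGraph (Fin n) where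
  Adj v w := T.Adj v w ∧ (v : ℕ) < k ∧ (w : ℕ) < k
  symm := ⟨fun _ _ ⟨h, hv, hw⟩ => ⟨h.symm, hw, hv⟩⟩
  loopless := ⟨fun v h => T.loopless.irrefl v h.1⟩

/-!
By relabelling, every pair of distinct vertices is an edge of the same number `c` of labelled
trees, so double counting (edge, tree) incidences gives `∑_T k_j(T) = C(j, 2) · c`. For `j = n`
each of the `N` trees contributes its `n - 1` edges, whence `n · c = 2 N`, and the expectation is
`C(j, 2) · c / N = j (j - 1) / n`; Cayley's formula `N = n^(n-2)` is not needed.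
-/

open Finset SimpleGraph

theorem Equiv.Perm.exists_apply_eq_and_apply_eq {V : Type*} {u v u' v' : V}
    (h : u ≠ v) (h' : u' ≠ v') : ∃ σ : Equiv.Perm V, σ u = u' ∧ σ v = v' := by
  set τ := Equiv.swap u u'
  have hτv : τ v ≠ u' := fun hv =>
    h (τ.injective (hv.trans (Equiv.swap_apply_left u u').symm)).symm
  refine ⟨τ.trans (Equiv.swap (τ v) v'), ?_, by simp⟩
  simp [τ, Equiv.swap_apply_of_ne_of_ne hτv.symm h']

theorem card_isTree_adj_eq {V : Type*} [Fintype V] [DecidableEq V] {u v u' v' : V}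
    (h : u ≠ v) (h' : u' ≠ v') :
    #{T : SimpleGraph V | T.IsTree ∧ T.Adj u v} =
      #{T : SimpleGraph V | T.IsTree ∧ T.Adj u' v'} := by
  obtain ⟨σ, rfl, rfl⟩ := Equiv.Perm.exists_apply_eq_and_apply_eq h h'
  refine card_equiv σ.simpleGraph fun T => ?_
  simp [(Iso.comap σ.symm T).isTree_iff]

theorem SimpleGraph.card_filter_adj_lt_eq_card_edgeFinset {V : Type*} [Fintype V] [LinearOrder V]
    (G : SimpleGraph V) : #{p : V × V | G.Adj p.1 p.2 ∧ p.1 < p.2} = #G.edgeFinset := by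
  refine card_nbij' (fun p => s(p.1, p.2)) (fun e => (e.inf, e.sup)) ?_ ?_ ?_ ?_
  · rintro ⟨a, b⟩ h
    simp_all
  · intro e he
    induction e using Sym2.ind with | _ a b => ?_
    simp only [mem_coe, mem_edgeFinset, mem_edgeSet, mem_filter, mem_univ, true_and,
      Sym2.inf_mk, Sym2.sup_mk] at he ⊢
    rcases le_total a b with hab | hab
    · simpa [hab] using ⟨he, hab.lt_of_ne he.ne⟩
    · simpa [hab] using ⟨he.symm, hab.lt_of_ne he.ne.symm⟩
  · rintro ⟨a, b⟩ h
    simp only [coe_filter, mem_univ, true_and, Set.mem_ofPred_eq] at h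
    simp [h.2.le]
  · intro e _
    exact Sym2.sortEquiv.symm_apply_apply e

theorem treeSet_nonempty {n : ℕ} (hn : 0 < n) : (treeSet n).Nonempty := by
  have : Nonempty (Fin n) := ⟨⟨0, hn⟩⟩
  obtain ⟨T, -, hT⟩ := (connected_top (V := Fin n)).exists_isTree_le
  exact ⟨T, by simpa [treeSet] using hT⟩

theorem mem_treeSet {n : ℕ} {T : SimpleGraph (Fin n)} : T ∈ treeSet n ↔ T.IsTree := by
  simp [treeSet]

def pairsBelow (n j : ℕ) : Finset (Fin n × Fin n) := {p | p.1 < p.2 ∧ (p.2 : ℕ) < j}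

theorem card_pairsBelow {n j : ℕ} (hj : j ≤ n) : #(pairsBelow n j) = j.choose 2 := by
  set s : Finset (Fin n) := {v | (v : ℕ) < j}
  have : pairsBelow n j = {p ∈ s ×ˢ s | p.1 < p.2} := by
    ext ⟨a, b⟩
    simp only [s, pairsBelow, mem_filter, mem_univ, true_and, mem_product, Fin.lt_def]
    omega
  rw [this, card_product_filter_lt, Fin.card_filter_val_lt, min_eq_right hj]

theorem uncoverEdges_eq_card_filter_pairsBelow {n : ℕ} (T : SimpleGraph (Fin n)) (j : ℕ) :
    uncoverEdges T j = #{p ∈ pairsBelow n j | T.Adj p.1 p.2} := by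
  simp only [uncoverEdges, pairsBelow, filter_filter, and_comm]

theorem uncoverEdges_le_choose {n j : ℕ} (T : SimpleGraph (Fin n)) (hj : j ≤ n) :
    uncoverEdges T j ≤ j.choose 2 :=
  uncoverEdges_eq_card_filter_pairsBelow T j ▸ card_pairsBelow hj ▸ card_filter_le _ _

theorem uncoverEdges_self_eq_of_isTree {n : ℕ} {T : SimpleGraph (Fin n)} (hT : T.IsTree) :
    uncoverEdges T n = n - 1 := by
  have hE := hT.card_edgeFinset
  rw [Fintype.card_fin] at hE
  have : uncoverEdges T n = #{p : Fin n × Fin n | T.Adj p.1 p.2 ∧ p.1 < p.2} := by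
    simp [uncoverEdges]
  rw [this, card_filter_adj_lt_eq_card_edgeFinset]
  omega

theorem sum_uncoverEdges_treeSet {n : ℕ} (j : ℕ) {u v : Fin n} (huv : u ≠ v) :
    ∑ T ∈ treeSet n, uncoverEdges T j = #(pairsBelow n j) * #{T ∈ treeSet n | T.Adj u v} := by
  have hcount : ∀ p ∈ pairsBelow n j,
      #{T ∈ treeSet n | T.Adj p.1 p.2} = #{T ∈ treeSet n | T.Adj u v} := by
    intro p hp
    simp only [treeSet, filter_filter]
    exact card_isTree_adj_eq (mem_filter.1 hp).2.1.ne huv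
  simp_rw [uncoverEdges_eq_card_filter_pairsBelow]
  rw [← sum_const_nat hcount]
  exact sum_card_bipartiteAbove_eq_sum_card_bipartiteBelow
    (fun (T : SimpleGraph (Fin n)) (p : Fin n × Fin n) => T.Adj p.1 p.2)

theorem mul_card_filter_adj_treeSet {n : ℕ} {u v : Fin n} (huv : u ≠ v) :
    n * #{T ∈ treeSet n | T.Adj u v} = 2 * #(treeSet n) := by
  have hsum := sum_uncoverEdges_treeSet n huv
  rw [sum_congr rfl fun T hT => uncoverEdges_self_eq_of_isTree (mem_treeSet.1 hT), sum_const,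
    smul_eq_mul, card_pairsBelow le_rfl] at hsum
  obtain ⟨m, rfl⟩ : ∃ m, n = m + 1 := ⟨n - 1, by have := Fin.val_ne_of_ne huv; omega⟩
  have hm : 0 < m := by have := Fin.val_ne_of_ne huv; omega
  have hchoose : (m + 1) * m = (m + 1).choose 2 * 2 := by simpa using Nat.add_one_mul_choose_eq m 1
  rw [Nat.add_sub_cancel] at hsum
  refine Nat.eq_of_mul_eq_mul_left hm ?_
  calc m * ((m + 1) * #{T ∈ treeSet (m + 1) | T.Adj u v})
      = (m + 1) * m * #{T ∈ treeSet (m + 1) | T.Adj u v} := by ring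
    _ = (m + 1).choose 2 * #{T ∈ treeSet (m + 1) | T.Adj u v} * 2 := by rw [hchoose]; ring
    _ = m * (2 * #(treeSet (m + 1))) := by rw [← hsum]; ring

theorem expected_uncovered_edges_general (n j : ℕ) (hjn : j ≤ n) :
    (∑ T ∈ treeSet n, (uncoverEdges T j : ℝ)) / ((treeSet n).card : ℝ)
      = (j : ℝ) * ((j : ℝ) - 1) / (n : ℝ) := by
  rcases lt_or_ge j 2 with hj | hj
  · have hzero (T : SimpleGraph (Fin n)) : uncoverEdges T j = 0 :=
      Nat.eq_zero_of_le_zero ((uncoverEdges_le_choose T hjn).trans_eq (Nat.choose_eq_zero_of_lt hj))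
    interval_cases j <;> simp [hzero]
  set u : Fin n := ⟨0, by omega⟩
  set v : Fin n := ⟨1, by omega⟩
  have huv : u ≠ v := by simp [u, v]
  have hN : (0 : ℝ) < #(treeSet n) := by exact_mod_cast (treeSet_nonempty (by omega)).card_pos
  have hn : (0 : ℝ) < n := by exact_mod_cast (show 0 < n by omega)
  have hc : (n : ℝ) * #{T ∈ treeSet n | T.Adj u v} = 2 * #(treeSet n) := by
    exact_mod_cast mul_card_filter_adj_treeSet huv
  rw [← Nat.cast_sum, sum_uncoverEdges_treeSet j huv, card_pairsBelow hjn]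
  push_cast [Nat.cast_choose_two]
  field_simp
  linear_combination ((j : ℝ) - 1) * hc

/-- The expected number of uncovered edges after `j` uncover steps in a uniformly random
labeled tree on `n` vertices is `j(j-1)/n`. -/
theorem expected_uncovered_edges (n j : ℕ) (hn : 1 ≤ n) (hj1 : 1 ≤ j) (hjn : j ≤ n) :
    (∑ T ∈ treeSet n, (uncoverEdges T j : ℝ)) / ((treeSet n).card : ℝ)
      = (j : ℝ) * ((j : ℝ) - 1) / (n : ℝ) :=
  expected_uncovered_edges_general n j hjn
end

section
/- For integers n ≥ 1 and 0 ≤ m ≤ k ≤ n, the root cluster size has the following exact distribution: P(R_n^{(k)} = 0) = 1 − k/n; for 1 ≤ m ≤ k < n, P(R_n^{(k)} = m) = binom(k, m) · m^m · (n − k) · (n − m)^{k − m − 1} / n^k, where for m = k the factor (n − k)·(n − m)^{k−m−1} is the rational number (n−k)·(n−k)^{−1} = 1; and P(R_n^{(n)} = n) = 1. -/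
/-!
A rooted labelled tree is the same thing as its parent map `f` (the root is the only fixed
point, and every nonempty `f`-invariant set contains the root); the root cluster consists of
the vertices whose forward `f`-orbit never leaves the labels `≤ k`. A parent map with root `ρ`
whose cluster is a given set `S ∋ ρ` is the same as a rooted tree on `S` together with a rooted
forest on the complement of `S`, with roots in `S`, in which no vertex of label `≤ k` is attached
directly to `S`. Both factors are counted by the generalised Cayley formula (there are
`r (a + r) ^ (a - 1)` rooted forests on `a + r` labelled vertices with `r` prescribed roots),
which follows by recursion on the set of vertices attached directly to a root together with the
identity `∑ c * C(b, c) * x ^ c * y ^ (b - c) = b * x * (x + y) ^ (b - 1)`. Summing over the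
`C(k, m)` sets `S` and the `m` roots in `S` gives the distribution.
-/

open scoped Classical
open Filter Topology MeasureTheory

/-- The finite set of all rooted labeled trees on vertex set `Fin n`
(a tree together with a distinguished root vertex); there are `n^(n-1)` of them. -/
noncomputable def rootedTreeSet (n : ℕ) : Finset (SimpleGraph (Fin n) × Fin n) :=
  Finset.univ.filter fun p => p.1.IsTree

/-- `rootCluster T ρ k` is the number of vertices of the connected component containing
the root `ρ` in the subgraph of `T` induced by the vertices with label `≤ k`;
it is `0` if the root's label exceeds `k`. -/
noncomputable def rootCluster {n : ℕ} (T : SimpleGraph (Fin n)) (ρ : Fin n) (k : ℕ) : ℕ :=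
  (Finset.univ.filter fun v : Fin n =>
    (v : ℕ) < k ∧ (restrictBelow T k).Reachable ρ v).card

/-- `E[R_n^{(k)}]`: the expected root cluster size after `k` uncover steps in a uniformly
random rooted labeled tree on `n` vertices. -/
noncomputable def expectR (n k : ℕ) : ℝ :=
  (∑ p ∈ rootedTreeSet n, (rootCluster p.1 p.2 k : ℝ)) / ((rootedTreeSet n).card : ℝ)

/-- `P(R_n^{(k)} = m)` for a uniformly random rooted labeled tree on `n` vertices. -/
noncomputable def probR (n k m : ℕ) : ℝ :=
  (((rootedTreeSet n).filter fun p => rootCluster p.1 p.2 k = m).card : ℝ)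
    / ((rootedTreeSet n).card : ℝ)

open Finset

lemma sum_range_choose_mul_mul_pow (b x y : ℕ) :
    ∑ c ∈ range (b + 1), b.choose c * c * x ^ c * y ^ (b - c) = b * x * (x + y) ^ (b - 1) := by
  cases b with
  | zero => simp
  | succ d =>
    rw [sum_range_succ', mul_zero, zero_mul, zero_mul, add_zero, add_tsub_cancel_right, add_pow,
      mul_sum]
    refine sum_congr rfl fun j _ => ?_
    rw [Nat.succ_sub_succ, ← Nat.add_one_mul_choose_eq, Nat.cast_id]
    ring

lemma sum_powerset_pow_mul_card_mul_pow {α : Type*} (B : Finset α) {a : ℕ} (r : ℕ) (hB : #B ≤ a) :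
    ∑ C ∈ B.powerset, r ^ #C * (#C * a ^ (a - #C))
      = a ^ (a - #B) * (#B * r * (a + r) ^ (#B - 1)) := by
  rw [sum_powerset_apply_card (fun c => r ^ c * (c * a ^ (a - c))), add_comm a r,
    ← sum_range_choose_mul_mul_pow, mul_sum]
  refine sum_congr rfl fun c hc => ?_
  have hcB : c ≤ #B := Nat.lt_succ_iff.1 (mem_range.1 hc)
  rw [smul_eq_mul, show a - c = (a - #B) + (#B - c) by omega, pow_add]
  ring

section ForestMaps

variable {α : Type*} [DecidableEq α]

/-- `f` is the parent map of a rooted forest on `A ∪ R` whose roots are the points of `R`: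
acyclicity is expressed as "no nonempty subset of `A` is mapped into itself". -/
structure IsForestMap (A R : Finset α) (f : α → α) : Prop where
  map_of_notMem : ∀ v ∉ A, f v = v
  mem_union : ∀ v ∈ A, f v ∈ A ∪ R
  eq_empty : ∀ B ⊆ A, (∀ v ∈ B, f v ∈ B) → B = ∅

lemma IsForestMap.eq_empty_of_right_eq_empty {A : Finset α} {f : α → α}
    (hf : IsForestMap A ∅ f) : A = ∅ :=
  hf.eq_empty A Subset.rfl fun v hv => by simpa using hf.mem_union v hv

lemma card_isForestMap_empty_left [Fintype α] (R : Finset α) : #{f | IsForestMap ∅ R f} = 1 := by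
  refine card_eq_one.2 ⟨id, eq_singleton_iff_unique_mem.2 ⟨?_, fun f hf => ?_⟩⟩
  · simpa using ⟨fun _ _ => rfl, by simp, fun B hB _ => subset_empty.1 hB⟩
  · exact funext fun v => (mem_filter.1 hf).2.map_of_notMem v (notMem_empty v)

lemma card_eq_card_mul_card_of_piecewise (A : Finset α) {s t₁ t₂ : Finset (α → α)}
    (h₁ : ∀ g ∈ t₁, ∀ v ∉ A, g v = v) (h₂ : ∀ h ∈ t₂, ∀ v ∈ A, h v = v)
    (hs : ∀ f, f ∈ s ↔ A.piecewise f id ∈ t₁ ∧ A.piecewise id f ∈ t₂) :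
    #s = #t₁ * #t₂ := by
  have split : ∀ g ∈ t₁, ∀ h ∈ t₂,
      A.piecewise (A.piecewise g h) id = g ∧ A.piecewise id (A.piecewise g h) = h := by
    refine fun g hg h hh => ⟨funext fun v => ?_, funext fun v => ?_⟩ <;>
      by_cases hv : v ∈ A <;> simp [hv, h₁ g hg, h₂ h hh]
  rw [← card_product]
  refine card_nbij' (fun f => (A.piecewise f id, A.piecewise id f))
    (fun p => A.piecewise p.1 p.2) (fun f hf => ?_) (fun p hp => ?_) (fun f _ => ?_)
    (fun p hp => ?_)
  · simpa using (hs f).1 hf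
  · obtain ⟨hp₁, hp₂⟩ := mem_product.1 hp
    obtain ⟨e₁, e₂⟩ := split _ hp₁ _ hp₂
    exact (hs _).2 ⟨e₁ ▸ hp₁, e₂ ▸ hp₂⟩
  · funext v
    by_cases hv : v ∈ A <;> simp [hv]
  · obtain ⟨hp₁, hp₂⟩ := mem_product.1 hp
    exact Prod.ext (split _ hp₁ _ hp₂).1 (split _ hp₁ _ hp₂).2

lemma card_filter_mapsTo [Fintype α] (C R : Finset α) :
    #{g : α → α | (∀ v ∉ C, g v = v) ∧ ∀ v ∈ C, g v ∈ R} = #R ^ #C := by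
  have : ({g : α → α | (∀ v ∉ C, g v = v) ∧ ∀ v ∈ C, g v ∈ R} : Finset (α → α))
      = Fintype.piFinset fun v => if v ∈ C then R else {v} := by
    ext g
    simp only [mem_filter, mem_univ, true_and, Fintype.mem_piFinset]
    refine ⟨fun ⟨h₁, h₂⟩ v => ?_, fun h => ⟨fun v hv => ?_, fun v hv => ?_⟩⟩
    · by_cases hv : v ∈ C <;> simp [hv, h₁, h₂]
    · simpa [hv] using h v
    · simpa [hv] using h v
  rw [this, Fintype.card_piFinset]
  simp only [apply_ite card, card_singleton]
  rw [prod_ite_mem, univ_inter, prod_const]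

lemma IsForestMap.delete_roots {A R : Finset α} {f : α → α} (hf : IsForestMap A R f) :
    IsForestMap (A \ {v ∈ A | f v ∈ R}) {v ∈ A | f v ∈ R} ({v ∈ A | f v ∈ R}.piecewise id f) := by
  refine ⟨fun v hv => ?_, fun v hv => ?_, fun B hB hBf =>
    hf.eq_empty B (hB.trans sdiff_subset) fun v hv => ?_⟩
  · by_cases hvC : v ∈ {v ∈ A | f v ∈ R}
    · simp [hvC]
    · simp only [piecewise_eq_of_notMem _ _ _ hvC]
      exact hf.map_of_notMem v fun hvA => hv (mem_sdiff.2 ⟨hvA, hvC⟩)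
  · obtain ⟨hvA, hvC⟩ := mem_sdiff.1 hv
    simp only [piecewise_eq_of_notMem _ _ _ hvC, sdiff_union_of_subset (filter_subset _ A)]
    simp only [mem_filter, hvA, true_and] at hvC
    simpa [hvC] using hf.mem_union v hvA
  · have hvC := (mem_sdiff.1 (hB hv)).2
    simpa [piecewise_eq_of_notMem _ _ _ hvC] using hBf v hv

/-- Splitting a forest map along the set `C` of points attached directly to a root. -/
lemma isForestMap_and_filter_eq_iff {A R F C : Finset α} (hAR : Disjoint A R) (hF : F ⊆ A)
    (hC : C ⊆ A \ F) (f : α → α) :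
    (IsForestMap A R f ∧ ∀ v ∈ F, f v ∉ R) ∧ {v ∈ A | f v ∈ R} = C ↔
      ((∀ v ∉ C, C.piecewise f id v = v) ∧ ∀ v ∈ C, C.piecewise f id v ∈ R) ∧
        IsForestMap (A \ C) C (C.piecewise id f) := by
  constructor
  · rintro ⟨⟨hf, -⟩, rfl⟩
    exact ⟨⟨fun v hv => by simp [hv], fun v hv => by simp_all⟩, hf.delete_roots⟩
  rintro ⟨⟨-, hg⟩, hh⟩
  have hCA : C ⊆ A := hC.trans sdiff_subset
  have hRA : ∀ v ∈ R, v ∉ A := fun v hv hvA => disjoint_left.1 hAR hvA hv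
  have hfC : ∀ v ∈ C, f v ∈ R := fun v hv => by simpa [hv] using hg v hv
  have hfA : ∀ v ∈ A, v ∉ C → f v ∈ A := fun v hvA hvC => by
    simpa [hvC, sdiff_union_of_subset hCA] using hh.mem_union v (mem_sdiff.2 ⟨hvA, hvC⟩)
  refine ⟨⟨⟨fun v hv => ?_, fun v hv => ?_, fun B hB hBf => ?_⟩, fun v hvF hvR => ?_⟩, ?_⟩
  · have hvC : v ∉ C := fun h => hv (hCA h)
    simpa [hvC] using hh.map_of_notMem v fun h => hv (mem_sdiff.1 h).1
  · by_cases hvC : v ∈ C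
    · exact mem_union_right _ (hfC v hvC)
    · exact mem_union_left _ (hfA v hv hvC)
  · have hBC : ∀ v ∈ B, v ∉ C := fun v hv hvC => hRA _ (hfC v hvC) (hB (hBf v hv))
    refine hh.eq_empty B (fun v hv => mem_sdiff.2 ⟨hB hv, hBC v hv⟩) fun v hv => ?_
    simpa [hBC v hv] using hBf v hv
  · exact hRA _ hvR (hfA v (hF hvF) fun hvC => (mem_sdiff.1 (hC hvC)).2 hvF)
  · ext v
    simp only [mem_filter]
    exact ⟨fun ⟨hvA, hvR⟩ => of_not_not fun hvC => hRA _ hvR (hfA v hvA hvC),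
      fun hvC => ⟨hCA hvC, hfC v hvC⟩⟩

lemma card_isForestMap_avoid_eq_sum [Fintype α] {A R F : Finset α} (hAR : Disjoint A R)
    (hF : F ⊆ A) :
    #{f | IsForestMap A R f ∧ ∀ v ∈ F, f v ∉ R}
      = ∑ C ∈ (A \ F).powerset, #R ^ #C * #{h | IsForestMap (A \ C) C h} := by
  rw [card_eq_sum_card_fiberwise (f := fun f => {v ∈ A | f v ∈ R}) (t := (A \ F).powerset)]
  · refine sum_congr rfl fun C hC => ?_
    rw [← card_filter_mapsTo C R]
    refine card_eq_card_mul_card_of_piecewise C (fun g hg => (mem_filter.1 hg).2.1)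
      (fun h hh v hv => (mem_filter.1 hh).2.map_of_notMem v fun h' => (mem_sdiff.1 h').2 hv)
      fun f => ?_
    simpa only [mem_filter, mem_univ, true_and] using
      isForestMap_and_filter_eq_iff hAR hF (mem_powerset.1 hC) f
  · intro f hf
    replace hf := (mem_filter.1 hf).2
    refine mem_powerset.2 fun v hv => ?_
    obtain ⟨hvA, hvR⟩ := mem_filter.1 hv
    exact mem_sdiff.2 ⟨hvA, fun hvF => hf.2 v hvF hvR⟩

lemma mul_card_isForestMap_avoid_of_sdiff [Fintype α] {A R F : Finset α} (hAR : Disjoint A R)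
    (hF : F ⊆ A)
    (hsub : ∀ C ⊆ A \ F, #A * #{g | IsForestMap (A \ C) C g} = #C * #A ^ (#A - #C)) :
    #A * #{f | IsForestMap A R f ∧ ∀ v ∈ F, f v ∉ R}
      = (#A - #F) * #R * #A ^ #F * (#A + #R) ^ (#A - #F - 1) := by
  rw [card_isForestMap_avoid_eq_sum hAR hF, mul_sum,
    sum_congr rfl fun C hC => by rw [mul_left_comm, hsub C (mem_powerset.1 hC)],
    sum_powerset_pow_mul_card_mul_pow _ _ (card_le_card sdiff_subset), card_sdiff_of_subset hF,
    Nat.sub_sub_self (card_le_card hF)]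
  ring

/-- Generalized Cayley formula: there are `r (a + r) ^ (a - 1)` rooted forests on `a + r`
labelled vertices whose root set is a given set of `r` vertices (and one if `a = 0`). -/
theorem card_isForestMap_mul [Fintype α] {A R : Finset α} (hAR : Disjoint A R) :
    (#A + #R) * #{f | IsForestMap A R f} = #R * (#A + #R) ^ #A := by
  induction A using Finset.strongInduction generalizing R with
  | H A ih =>
  rcases A.eq_empty_or_nonempty with rfl | hA
  · simp [card_isForestMap_empty_left]
  have hsub : ∀ C ⊆ A \ ∅, #A * #{g | IsForestMap (A \ C) C g} = #C * #A ^ (#A - #C) := by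
    intro C hC
    rw [sdiff_empty] at hC
    rcases C.eq_empty_or_nonempty with rfl | hC₀
    · rw [sdiff_empty, card_eq_zero.2 (filter_eq_empty_iff.2 fun g _ hg =>
        hA.ne_empty hg.eq_empty_of_right_eq_empty), card_empty, mul_zero, zero_mul]
    · have := ih (A \ C) (sdiff_ssubset hC hC₀) sdiff_disjoint
      rwa [card_sdiff_add_card_eq_card hC, card_sdiff_of_subset hC] at this
  have key := mul_card_isForestMap_avoid_of_sdiff hAR (empty_subset A) hsub
  simp only [notMem_empty, IsEmpty.forall_iff, implies_true, and_true, card_empty, Nat.sub_zero,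
    pow_zero, mul_one, mul_assoc] at key
  rw [Nat.eq_of_mul_eq_mul_left hA.card_pos key, mul_left_comm, ← pow_succ',
    Nat.sub_add_cancel hA.card_pos]

theorem card_isForestMap_avoid_mul [Fintype α] {A R F : Finset α} (hAR : Disjoint A R)
    (hF : F ⊆ A) :
    #A * #{f | IsForestMap A R f ∧ ∀ v ∈ F, f v ∉ R}
      = (#A - #F) * #R * #A ^ #F * (#A + #R) ^ (#A - #F - 1) :=
  mul_card_isForestMap_avoid_of_sdiff hAR hF fun C hC => by
    have hCA := hC.trans sdiff_subset
    have := card_isForestMap_mul (A := A \ C) (R := C) sdiff_disjoint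
    rwa [card_sdiff_add_card_eq_card hCA, card_sdiff_of_subset hCA] at this

end ForestMaps

section ParentMaps

variable {V : Type*}

structure IsParentMap (f : V → V) (ρ : V) : Prop where
  map_root : f ρ = ρ
  eq_empty : ∀ B : Finset V, (∀ v ∈ B, f v ∈ B) → ρ ∉ B → B = ∅

def functionalGraph (f : V → V) : SimpleGraph V :=
  SimpleGraph.fromRel fun v w => f v = w

variable {f g : V → V} {ρ v w : V}

@[simp]
lemma functionalGraph_adj : (functionalGraph f).Adj v w ↔ v ≠ w ∧ (f v = w ∨ f w = v) := by
  simp [functionalGraph]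

lemma isParentMap_iff_isForestMap [Fintype V] [DecidableEq V] :
    IsParentMap f ρ ↔ IsForestMap (univ.erase ρ) {ρ} f := by
  constructor
  · intro hf
    refine ⟨fun v hv => ?_, fun v _ => by simp, fun B hB hBf => hf.eq_empty B hBf ?_⟩
    · rw [of_not_not fun h => hv (mem_erase.2 ⟨h, mem_univ v⟩), hf.map_root]
    · exact fun hρ => notMem_erase ρ univ (hB hρ)
  · intro hf
    exact ⟨hf.map_of_notMem ρ (notMem_erase ρ univ), fun B hBf hρ =>
      hf.eq_empty B (fun v hv => mem_erase.2 ⟨fun h => hρ (h ▸ hv), mem_univ v⟩) hBf⟩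

lemma card_isParentMap [Fintype V] [DecidableEq V] (ρ : V) :
    Fintype.card V * #{f | IsParentMap f ρ} = Fintype.card V ^ (Fintype.card V - 1) := by
  have h := card_isForestMap_mul (disjoint_singleton_right.2 (notMem_erase ρ univ))
  rw [card_erase_of_mem (mem_univ ρ), card_singleton, card_univ,
    Nat.sub_add_cancel (Fintype.card_pos_iff.2 ⟨ρ⟩), one_mul] at h
  simpa only [isParentMap_iff_isForestMap] using h

namespace IsParentMap

lemma eq_root_of_map_eq (hf : IsParentMap f ρ) (hv : f v = v) : v = ρ := by
  by_contra h
  simpa using hf.eq_empty {v} (by simpa using hv) (by simpa using Ne.symm h)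

lemma eq_root_of_map_map_eq (hf : IsParentMap f ρ) (hv : f (f v) = v) : v = ρ := by
  by_contra h
  have hρ : ρ ∉ ({v, f v} : Finset V) := by
    simp only [mem_insert, mem_singleton, not_or]
    exact ⟨Ne.symm h, fun hρ => h (by rw [← hv, ← hρ, hf.map_root])⟩
  simpa using hf.eq_empty {v, f v} (by simp [hv]) hρ

lemma functionalGraph_adj_map (hf : IsParentMap f ρ) (hv : v ≠ ρ) :
    (functionalGraph f).Adj v (f v) :=
  functionalGraph_adj.2 ⟨fun h => hv (hf.eq_root_of_map_eq h.symm), Or.inl rfl⟩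

lemma connected [Fintype V] (hf : IsParentMap f ρ) : (functionalGraph f).Connected := by
  have hreach : ∀ v, (functionalGraph f).Reachable v ρ := by
    intro v
    by_contra hv
    have hB := hf.eq_empty {v | ¬ (functionalGraph f).Reachable v ρ} (fun w hw => ?_) (by simp)
    · exact (filter_eq_empty_iff.1 hB) (mem_univ v) hv
    · simp only [mem_filter, mem_univ, true_and] at hw ⊢
      refine fun hfw => hw ?_
      by_cases hwρ : w = ρ
      · exact hwρ ▸ SimpleGraph.Reachable.refl w
      · exact (hf.functionalGraph_adj_map hwρ).reachable.trans hfw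
  exact (SimpleGraph.connected_iff _).2 ⟨fun v w => (hreach v).trans (hreach w).symm, ⟨ρ⟩⟩

lemma isTree [Fintype V] (hf : IsParentMap f ρ) : (functionalGraph f).IsTree := by
  have hedges : (functionalGraph f).edgeFinset = (univ.erase ρ).image fun v => s(v, f v) := by
    ext e
    induction e using Sym2.ind with
    | h a b =>
    simp only [SimpleGraph.mem_edgeFinset, mem_image, mem_erase, mem_univ, and_true]
    constructor
    · rw [SimpleGraph.mem_edgeSet, functionalGraph_adj]
      rintro ⟨hab, rfl | rfl⟩
      · exact ⟨a, fun h => hab (h ▸ hf.map_root).symm, rfl⟩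
      · exact ⟨b, fun h => hab (h ▸ hf.map_root), Sym2.eq_swap⟩
    · rintro ⟨v, hv, hve⟩
      rw [← hve]
      exact hf.functionalGraph_adj_map hv
  have hinj : Set.InjOn (fun v => s(v, f v)) (univ.erase ρ : Set V) := by
    intro v hv w hw hvw
    rcases Sym2.eq_iff.1 hvw with ⟨h, -⟩ | ⟨h₁, h₂⟩
    · exact h
    · exact absurd (hf.eq_root_of_map_map_eq (show f (f w) = w by rw [← h₁, h₂]))
        (mem_erase.1 hw).1
  rw [SimpleGraph.isTree_iff_connected_and_card, Nat.card_eq_fintype_card,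
    ← SimpleGraph.edgeFinset_card, hedges, card_image_of_injOn hinj,
    card_erase_of_mem (mem_univ ρ), card_univ, Nat.card_eq_fintype_card,
    Nat.sub_add_cancel (Fintype.card_pos_iff.2 ⟨ρ⟩)]
  exact ⟨hf.connected, rfl⟩

lemma eq_of_functionalGraph_eq [Fintype V] (hf : IsParentMap f ρ) (hg : IsParentMap g ρ)
    (h : functionalGraph f = functionalGraph g) : f = g := by
  have hD := hf.eq_empty {v | f v ≠ g v} (fun v hv => ?_) (by simp [hf.map_root, hg.map_root])
  · exact funext fun v => of_not_not ((filter_eq_empty_iff.1 hD) (mem_univ v))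
  · simp only [mem_filter, mem_univ, true_and] at hv ⊢
    have hvρ : v ≠ ρ := fun h => hv (by rw [h, hf.map_root, hg.map_root])
    have hadj : (functionalGraph g).Adj v (f v) := h ▸ hf.functionalGraph_adj_map hvρ
    rcases (functionalGraph_adj.1 hadj).2 with h₁ | h₁
    · exact absurd h₁.symm hv
    · rw [h₁]
      exact fun h₂ => hvρ (hf.eq_root_of_map_map_eq h₂)

end IsParentMap

lemma SimpleGraph.Connected.exists_isParentMap {G : SimpleGraph V} (hG : G.Connected) (ρ : V) :
    ∃ f, IsParentMap f ρ ∧ functionalGraph f ≤ G := by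
  have step : ∀ v, v ≠ ρ → ∃ w, G.Adj v w ∧ G.dist w ρ < G.dist v ρ := by
    intro v hv
    obtain ⟨p, hp⟩ := hG.exists_walk_length_eq_dist v ρ
    cases p with
    | nil => exact absurd rfl hv
    | cons h q =>
      refine ⟨_, h, ?_⟩
      have := SimpleGraph.dist_le q
      rw [SimpleGraph.Walk.length_cons] at hp
      omega
  choose! parent hparent using step
  set f := Function.update parent ρ ρ
  have hf : ∀ v, v ≠ ρ → f v = parent v := fun v hv => Function.update_of_ne hv _ _
  refine ⟨f, ⟨Function.update_self _ _ _, fun B hBf hρ => ?_⟩, fun v w hvw => ?_⟩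
  · by_contra hB
    obtain ⟨v, hv, hmin⟩ := exists_min_image B (G.dist · ρ) (nonempty_iff_ne_empty.2 hB)
    have hvρ : v ≠ ρ := fun h => hρ (h ▸ hv)
    have := hmin _ (hBf v hv)
    rw [hf v hvρ] at this
    exact absurd (hparent v hvρ).2 (not_lt.2 this)
  · rcases (functionalGraph_adj.1 hvw) with ⟨hne, rfl | rfl⟩
    · have hvρ : v ≠ ρ := fun h => hne (by subst h; simp [f])
      rw [hf v hvρ]
      exact (hparent v hvρ).1
    · have hwρ : w ≠ ρ := fun h => hne (by subst h; simp [f])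
      rw [hf w hwρ]
      exact (hparent w hwρ).1.symm

lemma SimpleGraph.IsTree.exists_isParentMap_functionalGraph_eq [Fintype V] {T : SimpleGraph V}
    (hT : T.IsTree) (ρ : V) : ∃ f, IsParentMap f ρ ∧ functionalGraph f = T := by
  obtain ⟨f, hf, hle⟩ := hT.connected.exists_isParentMap ρ
  exact ⟨f, hf, (SimpleGraph.isTree_iff_minimal_connected.1 hT).eq_of_le hf.connected hle⟩

/-- A parent map under which `S ∋ ρ` is closed is a rooted tree on `S` together with a forest
on `Sᶜ` whose roots lie in `S`. -/
lemma isParentMap_and_mapsTo_iff [Fintype V] [DecidableEq V] {S : Finset V} (hρ : ρ ∈ S) :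
    IsParentMap f ρ ∧ (∀ v ∈ S, f v ∈ S) ↔
      IsForestMap (S.erase ρ) {ρ} (S.piecewise f id) ∧ IsForestMap Sᶜ S (S.piecewise id f) := by
  constructor
  · rintro ⟨hf, hS⟩
    refine ⟨⟨fun v hv => ?_, fun v hv => ?_, fun B hB hBf => hf.eq_empty B (fun v hv => ?_) ?_⟩,
      ⟨fun v hv => by simp [of_not_not (mt mem_compl.2 hv)], fun v _ => by simp [em'],
        fun B hB hBf => hf.eq_empty B (fun v hv => ?_) fun h => mem_compl.1 (hB h) hρ⟩⟩
    · by_cases hvS : v ∈ S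
      · rw [of_not_not fun h => hv (mem_erase.2 ⟨h, hvS⟩), piecewise_eq_of_mem _ _ _ hρ,
          hf.map_root]
      · simp [hvS]
    · simpa [insert_erase hρ, mem_of_mem_erase hv] using hS v (mem_of_mem_erase hv)
    · simpa [mem_of_mem_erase (hB hv)] using hBf v hv
    · exact fun h => notMem_erase ρ S (hB h)
    · simpa [mem_compl.1 (hB hv)] using hBf v hv
  · rintro ⟨hg, hh⟩
    have hfS : ∀ v ∈ S, f v ∈ S := fun v hv => by
      by_cases hvρ : v = ρ
      · have := hg.map_of_notMem ρ (notMem_erase ρ S)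
        rw [piecewise_eq_of_mem _ _ _ hρ] at this
        rwa [hvρ, this]
      · simpa [hv, insert_erase hρ] using hg.mem_union v (mem_erase.2 ⟨hvρ, hv⟩)
    refine ⟨⟨by simpa [hρ] using hg.map_of_notMem ρ (notMem_erase ρ S), fun B hBf hρB => ?_⟩, hfS⟩
    have hBS : B ∩ S = ∅ := hg.eq_empty _ (fun v hv => mem_erase.2
      ⟨fun h => hρB (h ▸ (mem_inter.1 hv).1), (mem_inter.1 hv).2⟩) fun v hv => by
        obtain ⟨hvB, hvS⟩ := mem_inter.1 hv
        simpa [hvS] using mem_inter.2 ⟨hBf v hvB, hfS v hvS⟩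
    have hBc : ∀ v ∈ B, v ∉ S := fun v hvB hvS => by simpa [hBS] using mem_inter.2 ⟨hvB, hvS⟩
    exact hh.eq_empty B (fun v hv => mem_compl.2 (hBc v hv)) fun v hv => by
      simpa [hBc v hv] using hBf v hv

end ParentMaps

section RootCluster

variable {n k : ℕ} {f : Fin n → Fin n} {ρ v : Fin n}

/-- The vertices whose whole forward orbit under `f` has labels `≤ k`; for a parent map this
is the root cluster (`rootCluster_functionalGraph`). -/
noncomputable def trappedBelow (f : Fin n → Fin n) (k : ℕ) : Finset (Fin n) :=
  {v | ∀ j, (f^[j] v : ℕ) < k}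

@[simp]
lemma mem_trappedBelow : v ∈ trappedBelow f k ↔ ∀ j, (f^[j] v : ℕ) < k := by
  simp [trappedBelow]

lemma lt_of_mem_trappedBelow (hv : v ∈ trappedBelow f k) : (v : ℕ) < k :=
  mem_trappedBelow.1 hv 0

lemma map_mem_trappedBelow (hv : v ∈ trappedBelow f k) : f v ∈ trappedBelow f k :=
  mem_trappedBelow.2 fun j => by
    simpa only [Function.iterate_succ_apply] using mem_trappedBelow.1 hv (j + 1)

lemma mem_trappedBelow_of_map_mem (hv : (v : ℕ) < k) (hfv : f v ∈ trappedBelow f k) :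
    v ∈ trappedBelow f k :=
  mem_trappedBelow.2 fun j => by
    cases j with
    | zero => exact hv
    | succ j => simpa only [Function.iterate_succ_apply] using mem_trappedBelow.1 hfv j

lemma trappedBelow_self (f : Fin n → Fin n) : trappedBelow f n = univ :=
  eq_univ_of_forall fun v => mem_trappedBelow.2 fun j => (f^[j] v).is_lt

namespace IsParentMap

lemma root_mem_trappedBelow_iff (hf : IsParentMap f ρ) : ρ ∈ trappedBelow f k ↔ (ρ : ℕ) < k := by
  simp [Function.iterate_fixed hf.map_root]

lemma trappedBelow_eq_empty_iff (hf : IsParentMap f ρ) : trappedBelow f k = ∅ ↔ k ≤ (ρ : ℕ) := by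
  refine ⟨fun h => not_lt.1 fun hρ => ?_, fun hρ =>
    hf.eq_empty (trappedBelow f k) (fun _ => map_mem_trappedBelow)
    (by rwa [hf.root_mem_trappedBelow_iff, not_lt])⟩
  simpa [h] using (hf.root_mem_trappedBelow_iff (k := k)).2 hρ

lemma root_mem_of_trappedBelow_eq (hf : IsParentMap f ρ) {S : Finset (Fin n)}
    (hS : trappedBelow f k = S) (hS₀ : S.Nonempty) : ρ ∈ S := by
  by_contra hρ
  subst hS
  exact hS₀.ne_empty (hf.eq_empty (trappedBelow f k) (fun _ => map_mem_trappedBelow) hρ)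

lemma trappedBelow_eq_iff (hf : IsParentMap f ρ) {S : Finset (Fin n)} (hS : ∀ v ∈ S, (v : ℕ) < k)
    (hρ : ρ ∈ S) :
    trappedBelow f k = S ↔ (∀ v ∈ S, f v ∈ S) ∧ ∀ v : Fin n, (v : ℕ) < k → v ∉ S → f v ∉ S := by
  constructor
  · rintro rfl
    exact ⟨fun v => map_mem_trappedBelow,
      fun v hv hvS hfv => hvS (mem_trappedBelow_of_map_mem hv hfv)⟩
  · rintro ⟨hSf, hout⟩
    refine Subset.antisymm (sdiff_eq_empty_iff_subset.1 ?_) fun v hv => mem_trappedBelow.2 ?_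
    · refine hf.eq_empty _ (fun v hv => ?_) fun h => (mem_sdiff.1 h).2 hρ
      obtain ⟨hvT, hvS⟩ := mem_sdiff.1 hv
      exact mem_sdiff.2 ⟨map_mem_trappedBelow hvT, hout v (lt_of_mem_trappedBelow hvT) hvS⟩
    · intro j
      refine hS _ ?_
      induction j with
      | zero => exact hv
      | succ j ih => exact Function.iterate_succ_apply' f j v ▸ hSf _ ih

lemma rootCluster_functionalGraph (hf : IsParentMap f ρ) (k : ℕ) :
    rootCluster (functionalGraph f) ρ k = #(trappedBelow f k) := by
  set G := restrictBelow (functionalGraph f) k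
  have hclosed : ∀ {x y}, G.Walk x y → x ∈ trappedBelow f k → y ∈ trappedBelow f k := by
    intro x y p
    induction p with
    | nil => exact id
    | cons h _ ih =>
      obtain ⟨hxy, -, hy⟩ := h
      refine fun hx => ih ?_
      rcases (functionalGraph_adj.1 hxy).2 with rfl | h
      · exact map_mem_trappedBelow hx
      · exact mem_trappedBelow_of_map_mem hy (h ▸ hx)
  rw [rootCluster]
  congr 1
  ext v
  simp only [mem_filter, mem_univ, true_and]
  constructor
  · rintro ⟨hv, ⟨p⟩⟩
    refine hclosed p (hf.root_mem_trappedBelow_iff.2 ?_)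
    cases p with
    | nil => exact hv
    | cons h _ => exact h.2.1
  · intro hv
    refine ⟨lt_of_mem_trappedBelow hv, of_not_not fun hvρ => ?_⟩
    have hB := hf.eq_empty {x ∈ trappedBelow f k | ¬ G.Reachable ρ x} (fun x hx => ?_) (by simp)
    · exact (filter_eq_empty_iff.1 hB) hv hvρ
    · obtain ⟨hxT, hxρ⟩ := mem_filter.1 hx
      refine mem_filter.2 ⟨map_mem_trappedBelow hxT, fun hfx => hxρ (hfx.trans ?_)⟩
      have hne : x ≠ ρ := fun h => hxρ (h ▸ SimpleGraph.Reachable.refl _)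
      exact SimpleGraph.Adj.reachable ⟨(hf.functionalGraph_adj_map hne).symm,
        lt_of_mem_trappedBelow (map_mem_trappedBelow hxT), lt_of_mem_trappedBelow hxT⟩

end IsParentMap

lemma isParentMap_and_trappedBelow_eq_iff {S : Finset (Fin n)} (hS : ∀ v ∈ S, (v : ℕ) < k)
    (hρ : ρ ∈ S) :
    IsParentMap f ρ ∧ trappedBelow f k = S ↔
      IsForestMap (S.erase ρ) {ρ} (S.piecewise f id) ∧ IsForestMap Sᶜ S (S.piecewise id f) ∧
        ∀ v ∈ ({v | (v : ℕ) < k} : Finset (Fin n)) \ S, S.piecewise id f v ∉ S := by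
  rw [← and_assoc, ← isParentMap_and_mapsTo_iff hρ]
  constructor
  · rintro ⟨hf, hT⟩
    obtain ⟨hfS, hout⟩ := (hf.trappedBelow_eq_iff hS hρ).1 hT
    refine ⟨⟨hf, hfS⟩, fun v hv => ?_⟩
    obtain ⟨hvK, hvS⟩ := mem_sdiff.1 hv
    simpa [hvS] using hout v (by simpa using hvK) hvS
  · rintro ⟨⟨hf, hfS⟩, hout⟩
    refine ⟨hf, (hf.trappedBelow_eq_iff hS hρ).2 ⟨hfS, fun v hv hvS => ?_⟩⟩
    simpa [hvS] using hout v (mem_sdiff.2 ⟨by simpa using hv, hvS⟩)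

end RootCluster

section Counting

lemma card_filter_prod_eq_sum {β γ : Type*} [Fintype β] [Fintype γ] (P : β → γ → Prop)
    [∀ b c, Decidable (P b c)] :
    #{p : β × γ | P p.1 p.2} = ∑ c, #{b | P b c} := by
  simp only [card_filter, Fintype.sum_prod_type_right]

lemma card_isParentMap_pair {V : Type*} [Fintype V] [DecidableEq V] [Nonempty V] :
    #{p : (V → V) × V | IsParentMap p.1 p.2} = Fintype.card V ^ (Fintype.card V - 1) := by
  refine Nat.eq_of_mul_eq_mul_left (Fintype.card_pos (α := V)) ?_
  rw [card_filter_prod_eq_sum IsParentMap, mul_sum, sum_congr rfl fun ρ _ => card_isParentMap ρ,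
    sum_const, card_univ, smul_eq_mul]

variable {n k : ℕ}

lemma card_filter_rootedTreeSet (k : ℕ) (P : ℕ → Prop) :
    #{p ∈ rootedTreeSet n | P (rootCluster p.1 p.2 k)}
      = #{p : (Fin n → Fin n) × Fin n | IsParentMap p.1 p.2 ∧ P #(trappedBelow p.1 k)} := by
  symm
  refine card_bij (fun p _ => (functionalGraph p.1, p.2)) (fun p hp => ?_) (fun p hp q hq hpq => ?_)
    fun T hT => ?_
  · obtain ⟨hf, hP⟩ := (mem_filter.1 hp).2
    simpa [rootedTreeSet, hf.isTree, hf.rootCluster_functionalGraph] using hP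
  · obtain ⟨h₁, h₂⟩ := Prod.mk.inj hpq
    have hq' := (mem_filter.1 hq).2.1
    rw [← h₂] at hq'
    exact Prod.ext ((mem_filter.1 hp).2.1.eq_of_functionalGraph_eq hq' h₁) h₂
  · obtain ⟨T, ρ⟩ := T
    simp only [rootedTreeSet, mem_filter, mem_univ, true_and] at hT
    obtain ⟨f, hf, rfl⟩ := hT.1.exists_isParentMap_functionalGraph_eq ρ
    exact ⟨(f, ρ), by simpa [hf, ← hf.rootCluster_functionalGraph] using hT.2, rfl⟩

lemma card_isParentMap_trappedBelow_eq (hk : k ≤ n) {S : Finset (Fin n)} {ρ : Fin n}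
    (hS : ∀ v ∈ S, (v : ℕ) < k) (hρ : ρ ∈ S) :
    (n - #S) * #{f | IsParentMap f ρ ∧ trappedBelow f k = S}
      = #S ^ (#S - 1) * ((n - k) * (n - #S) ^ (k - #S) * n ^ (n - k - 1)) := by
  set K : Finset (Fin n) := {v | (v : ℕ) < k}
  have hSK : S ⊆ K := fun v hv => by simpa [K] using hS v hv
  have hK : #K = k := by simpa [K, min_eq_right hk] using Fin.card_filter_val_lt (n := n) (m := k)
  have hsplit : #{f | IsParentMap f ρ ∧ trappedBelow f k = S}
      = #{g | IsForestMap (S.erase ρ) {ρ} g}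
        * #{h | IsForestMap Sᶜ S h ∧ ∀ v ∈ K \ S, h v ∉ S} := by
    refine card_eq_card_mul_card_of_piecewise S (fun g hg v hv => ?_) (fun h hh v hv => ?_)
      fun f => ?_
    · exact (mem_filter.1 hg).2.map_of_notMem v fun h => hv (mem_of_mem_erase h)
    · exact (mem_filter.1 hh).2.1.map_of_notMem v fun h => mem_compl.1 h hv
    · simpa only [mem_filter, mem_univ, true_and] using isParentMap_and_trappedBelow_eq_iff hS hρ
  have htree := card_isForestMap_mul (disjoint_singleton_right.2 (notMem_erase ρ S))
  have hforest := card_isForestMap_avoid_mul (A := Sᶜ) (R := S) (F := K \ S) disjoint_compl_left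
    fun v hv => mem_compl.2 (mem_sdiff.1 hv).2
  rw [card_erase_of_mem hρ, card_singleton, Nat.sub_add_cancel (card_pos.2 ⟨ρ, hρ⟩)] at htree
  rw [card_compl, card_sdiff_of_subset hSK, hK, Fintype.card_fin] at hforest
  have hSk : #S ≤ k := hK ▸ card_le_card hSK
  rw [show n - #S - (k - #S) = n - k by omega, Nat.sub_add_cancel (hSk.trans hk)] at hforest
  refine Nat.eq_of_mul_eq_mul_left (card_pos.2 ⟨ρ, hρ⟩) ?_
  calc #S * ((n - #S) * #{f | IsParentMap f ρ ∧ trappedBelow f k = S})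
      = (#S * #{g | IsForestMap (S.erase ρ) {ρ} g})
          * ((n - #S) * #{h | IsForestMap Sᶜ S h ∧ ∀ v ∈ K \ S, h v ∉ S}) := by
        rw [hsplit]; ring
    _ = 1 * #S ^ (#S - 1) * ((n - k) * #S * (n - #S) ^ (k - #S) * n ^ (n - k - 1)) := by
        rw [htree]
        congr 1
        -- the two sets differ only in their decidability instances
        convert hforest
    _ = _ := by ring

lemma card_isParentMap_card_trappedBelow_eq_zero (hk : k ≤ n) :
    n * #{p : (Fin n → Fin n) × Fin n | IsParentMap p.1 p.2 ∧ #(trappedBelow p.1 k) = 0}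
      = (n - k) * n ^ (n - 1) := by
  have hρ : ∀ ρ : Fin n, n * #{f | IsParentMap f ρ ∧ #(trappedBelow f k) = 0}
      = if (ρ : ℕ) < k then 0 else n ^ (n - 1) := by
    intro ρ
    have h := card_isParentMap ρ
    rw [Fintype.card_fin] at h
    split_ifs with hρk
    · refine mul_eq_zero_of_right _ (card_eq_zero.2 (filter_eq_empty_iff.2 fun f _ hf => ?_))
      exact absurd (hf.1.trappedBelow_eq_empty_iff.1 (card_eq_zero.1 hf.2)) (not_le.2 hρk)
    · rw [← h]
      congr 2
      ext f
      simp only [mem_filter, mem_univ, true_and, card_eq_zero, and_iff_left_iff_imp]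
      exact fun hf => hf.trappedBelow_eq_empty_iff.2 (not_lt.1 hρk)
  have hK : #{ρ : Fin n | (ρ : ℕ) < k} = k := by rw [Fin.card_filter_val_lt, min_eq_right hk]
  have hcompl := card_filter_add_card_filter_not (s := univ) fun ρ : Fin n => (ρ : ℕ) < k
  rw [hK, card_univ, Fintype.card_fin] at hcompl
  rw [card_filter_prod_eq_sum (fun f ρ => IsParentMap f ρ ∧ #(trappedBelow f k) = 0), mul_sum,
    sum_congr rfl fun ρ _ => hρ ρ, sum_ite, sum_const_zero, sum_const, smul_eq_mul, zero_add]
  congr 1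
  omega

lemma card_isParentMap_card_trappedBelow_eq (hk : k ≤ n) {m : ℕ} (hm : 1 ≤ m) :
    (n - m) * #{p : (Fin n → Fin n) × Fin n | IsParentMap p.1 p.2 ∧ #(trappedBelow p.1 k) = m}
      = k.choose m * m ^ m * ((n - k) * (n - m) ^ (k - m) * n ^ (n - k - 1)) := by
  set K : Finset (Fin n) := {v | (v : ℕ) < k}
  set W := m ^ (m - 1) * ((n - k) * (n - m) ^ (k - m) * n ^ (n - k - 1))
  have hρ : ∀ ρ : Fin n, (n - m) * #{f | IsParentMap f ρ ∧ #(trappedBelow f k) = m}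
      = ∑ S ∈ K.powersetCard m, if ρ ∈ S then W else 0 := by
    intro ρ
    rw [card_eq_sum_card_fiberwise (f := (trappedBelow · k)) (t := K.powersetCard m), mul_sum]
    · refine sum_congr rfl fun S hS => ?_
      obtain ⟨hSK, hSm⟩ := mem_powersetCard.1 hS
      have hfilter : filter (trappedBelow · k = S) {f | IsParentMap f ρ ∧ #(trappedBelow f k) = m}
          = ({f | IsParentMap f ρ ∧ trappedBelow f k = S} : Finset (Fin n → Fin n)) := by
        ext f
        simp only [mem_filter, mem_univ, true_and]
        exact ⟨fun h => ⟨h.1.1, h.2⟩, fun h => ⟨⟨h.1, h.2 ▸ hSm⟩, h.2⟩⟩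
      rw [hfilter]
      split_ifs with hρS
      · have := card_isParentMap_trappedBelow_eq hk (fun v hv => by simpa [K] using hSK hv) hρS
        rwa [hSm] at this
      · refine mul_eq_zero_of_right _ (card_eq_zero.2 (filter_eq_empty_iff.2 fun f _ hf => ?_))
        exact hρS (hf.1.root_mem_of_trappedBelow_eq hf.2 (card_pos.1 (hSm ▸ hm)))
    · intro f hf
      refine mem_powersetCard.2 ⟨fun v hv => ?_, (mem_filter.1 hf).2.2⟩
      simpa [K] using lt_of_mem_trappedBelow hv
  have hK : #K = k := by rw [Fin.card_filter_val_lt, min_eq_right hk]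
  rw [card_filter_prod_eq_sum (fun f ρ => IsParentMap f ρ ∧ #(trappedBelow f k) = m), mul_sum,
    sum_congr rfl fun ρ _ => hρ ρ, sum_comm,
    sum_congr rfl fun S hS => by rw [sum_ite_mem, univ_inter, sum_const, (mem_powersetCard.1 hS).2],
    sum_const, card_powersetCard, hK, smul_eq_mul, smul_eq_mul, ← mul_pow_sub_one (by omega) m]
  ring

lemma card_isParentMap_pair_fin (hn : 1 ≤ n) :
    #{p : (Fin n → Fin n) × Fin n | IsParentMap p.1 p.2} = n ^ (n - 1) := by
  have : Nonempty (Fin n) := ⟨⟨0, hn⟩⟩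
  simpa using card_isParentMap_pair (V := Fin n)

lemma card_rootedTreeSet (hn : 1 ≤ n) : #(rootedTreeSet n) = n ^ (n - 1) := by
  rw [← card_isParentMap_pair_fin hn]
  convert card_filter_rootedTreeSet 0 fun _ => True using 2 <;> ext <;> simp

lemma probR_eq (hn : 1 ≤ n) (k m : ℕ) :
    probR n k m = #{p : (Fin n → Fin n) × Fin n | IsParentMap p.1 p.2 ∧ #(trappedBelow p.1 k) = m}
      / (n : ℝ) ^ (n - 1) := by
  rw [probR, card_rootedTreeSet hn, Nat.cast_pow]
  congr 2
  convert card_filter_rootedTreeSet k (· = m)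

lemma card_isParentMap_card_trappedBelow_self (hn : 1 ≤ n) :
    #{p : (Fin n → Fin n) × Fin n | IsParentMap p.1 p.2 ∧ #(trappedBelow p.1 n) = n}
      = n ^ (n - 1) := by
  rw [← card_isParentMap_pair_fin hn]
  exact congrArg card (filter_congr fun p _ => by simp [trappedBelow_self])

end Counting

/-- Exact distribution of the root cluster size `R_n^{(k)}`:
`P(R_n^{(k)} = 0) = 1 - k/n`; for `1 ≤ m ≤ k < n`,
`P(R_n^{(k)} = m) = C(k,m) m^m (n-k) (n-m)^{k-m-1} / n^k` (the exponent `k-m-1` being an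
integer exponent, so that for `m = k` the factor `(n-k)(n-m)^{k-m-1}` equals
`(n-k)(n-k)⁻¹ = 1`); and `P(R_n^{(n)} = n) = 1`. -/
theorem root_cluster_distribution (n k : ℕ) (hn : 1 ≤ n) (hk : k ≤ n) :
    probR n k 0 = 1 - (k : ℝ) / (n : ℝ)
    ∧ (∀ m : ℕ, 1 ≤ m → m ≤ k → k < n →
        probR n k m
          = (k.choose m : ℝ) * (m : ℝ) ^ m * ((n : ℝ) - (k : ℝ))
              * ((n : ℝ) - (m : ℝ)) ^ ((k : ℤ) - (m : ℤ) - 1) / (n : ℝ) ^ k)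
    ∧ (k = n → probR n n n = 1) := by
  refine ⟨?_, fun m hm hmk hkn => ?_, fun _ => ?_⟩
  · have h := congrArg (Nat.cast : ℕ → ℝ) (card_isParentMap_card_trappedBelow_eq_zero hk)
    push_cast [Nat.cast_sub hk] at h
    rw [probR_eq hn]
    field_simp
    linear_combination h
  · have h := congrArg (Nat.cast : ℕ → ℝ) (card_isParentMap_card_trappedBelow_eq hk hm)
    push_cast [Nat.cast_sub hk, Nat.cast_sub (hmk.trans hk), Nat.cast_sub hmk] at h
    have hnm : (n : ℝ) - m ≠ 0 := sub_ne_zero.2 (by exact_mod_cast (hmk.trans_lt hkn).ne')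
    rw [probR_eq hn, show (k : ℤ) - m - 1 = ((k - m : ℕ) : ℤ) - 1 by omega, zpow_sub_one₀ hnm,
      zpow_natCast, show n - 1 = k + (n - k - 1) by omega, pow_add]
    field_simp
    linear_combination h
  · rw [probR_eq hn, card_isParentMap_card_trappedBelow_self hn, Nat.cast_pow,
      div_self (by positivity)]
end
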